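/- Assume m is even and positive, and let b be a positive divisor of n. Then neither the homogeneous space attached to (2b, b) nor the homogeneous space attached to (2b, 2b) has a 2-adic solution. -/

import Mathlib

/-!
Let `v` be the 2-adic valuation. Every term of the defining equations has the shape `2^j·u·z²`
with `u` odd, hence valuation `j + 2·v z`. So `A = 2b·z1²` has odd valuation, and
`v (A + c) = min (v A) (v c)` whenever `v c` is even, e.g. for `c = ±2^m, ±2^m n², -b·z2²`.
For `(2b, b)`: `A + 2^m = 2b²·z3²` has odd valuation, forcing `v A < m`, while
`A - b·z2² = 2^m n²` gives `m = min (v A) (2·v z2)`, forcing `m < v A`.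
For `(2b, 2b)`: `A + 2^m = 4b²·z3²` has even valuation, forcing `m < v A`, while
`A - 2^m n² = 2b·z2²` has odd valuation, forcing `v A < m`.
-/

/-- A `K`-solution of the homogeneous space attached to the pair `(b1, b2)`:
a triple `(z1, z2, z3)` in `K^3` with `z1 ≠ 0`, `z2 ≠ 0`, satisfying
`b1·z1² − b2·z2² = 2^m·n²` and `b1·z1² − b1·b2·z3² = −2^m`. -/
def HSol (K : Type*) [Field K] (m n : ℕ) (b1 b2 : ℤ) (z1 z2 z3 : K) : Prop :=
  z1 ≠ 0 ∧ z2 ≠ 0 ∧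
    (b1 : K) * z1 ^ 2 - (b2 : K) * z2 ^ 2 = 2 ^ m * (n : K) ^ 2 ∧
    (b1 : K) * z1 ^ 2 - (b1 : K) * (b2 : K) * z3 ^ 2 = -(2 ^ m)

namespace Padic

variable {p : ℕ} [Fact p.Prime]

@[simp]
theorem valuation_neg (x : ℚ_[p]) : (-x).valuation = x.valuation := by
  rcases eq_or_ne x 0 with rfl | hx
  · simp
  · have h := (addValuation : AddValuation ℚ_[p] _).map_neg x
    rwa [addValuation.apply hx, addValuation.apply (neg_ne_zero.2 hx), WithTop.coe_inj] at h

theorem add_ne_zero_and_valuation_add_of_valuation_ne {x y : ℚ_[p]} (hx : x ≠ 0) (hy : y ≠ 0)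
    (h : x.valuation ≠ y.valuation) :
    x + y ≠ 0 ∧ (x + y).valuation = min x.valuation y.valuation := by
  have hmin := (addValuation : AddValuation ℚ_[p] _).map_add_of_distinct_val (x := x) (y := y)
    (by rwa [addValuation.apply hx, addValuation.apply hy, Ne, WithTop.coe_inj])
  rw [addValuation.apply hx, addValuation.apply hy, ← WithTop.coe_min] at hmin
  have hxy : x + y ≠ 0 := addValuation.ne_top_iff.1 (by simp [hmin])
  rw [addValuation.apply hxy, WithTop.coe_inj] at hmin
  exact ⟨hxy, hmin⟩

theorem add_ne_zero_and_valuation_add_of_odd_of_even {x y : ℚ_[p]} (hx : Odd x.valuation)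
    (hy : y ≠ 0) (hy' : Even y.valuation) :
    x + y ≠ 0 ∧ (x + y).valuation = min x.valuation y.valuation := by
  have hx0 : x ≠ 0 := by rintro rfl; simp at hx
  exact add_ne_zero_and_valuation_add_of_valuation_ne hx0 hy
    fun h ↦ Int.not_even_iff_odd.2 hx (h ▸ hy')

theorem valuation_natCast_of_odd {k : ℕ} (hk : Odd k) : (k : ℚ_[2]).valuation = 0 := by
  simp [padicValNat.eq_zero_of_not_dvd hk.not_two_dvd_nat]

theorem valuation_two_pow (j : ℕ) : ((2 : ℚ_[2]) ^ j).valuation = j := by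
  simp

theorem valuation_two_pow_mul_natCast_mul_sq (j : ℕ) {u : ℕ} (hu : Odd u) {z : ℚ_[2]}
    (hz : z ≠ 0) : ((2 : ℚ_[2]) ^ j * u * z ^ 2).valuation = j + 2 * z.valuation := by
  simp [valuation_mul, hz, hu.pos.ne', valuation_natCast_of_odd hu]

theorem valuation_two_pow_mul_natCast_sq (j : ℕ) {u : ℕ} (hu : Odd u) :
    ((2 : ℚ_[2]) ^ j * (u : ℚ_[2]) ^ 2).valuation = j := by
  simp [valuation_mul, hu.pos.ne', valuation_natCast_of_odd hu]

end Padic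

open Padic

theorem not_hSol_two_mul_odd_odd {m n b : ℕ} (hm : Even m) (hn : Odd n) (hb : Odd b)
    (z1 z2 z3 : ℚ_[2]) : ¬ HSol ℚ_[2] m n (2 * b) b z1 z2 z3 := by
  rintro ⟨hz1, hz2, e1, e2⟩
  push_cast at e1 e2
  have vA := valuation_two_pow_mul_natCast_mul_sq 1 hb hz1
  have vB := valuation_two_pow_mul_natCast_mul_sq 0 hb hz2
  have hA : Odd ((2 : ℚ_[2]) ^ 1 * b * z1 ^ 2).valuation := by
    rw [vA]; exact ⟨z1.valuation, by push_cast; ring⟩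
  obtain ⟨-, hv1⟩ := add_ne_zero_and_valuation_add_of_odd_of_even
    (y := -((2 : ℚ_[2]) ^ 0 * (b : ℚ_[2]) * z2 ^ 2)) hA (by simp [hz2, hb.pos.ne'])
    (by rw [valuation_neg, vB]; simp)
  obtain ⟨hne2, hv2⟩ := add_ne_zero_and_valuation_add_of_odd_of_even
    (y := (2 : ℚ_[2]) ^ m) hA (by simp) (by rw [valuation_two_pow]; exact hm.natCast)
  rw [show (2 : ℚ_[2]) ^ 1 * b * z1 ^ 2 + -(2 ^ 0 * b * z2 ^ 2) = 2 ^ m * (n : ℚ_[2]) ^ 2 by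
    linear_combination e1, valuation_two_pow_mul_natCast_sq m hn, valuation_neg, vA, vB] at hv1
  rw [show (2 : ℚ_[2]) ^ 1 * b * z1 ^ 2 + 2 ^ m = 2 ^ 1 * (b * b : ℕ) * z3 ^ 2 by
    push_cast; linear_combination e2] at hv2 hne2
  have hz3 : z3 ≠ 0 := by rintro rfl; simp at hne2
  rw [valuation_two_pow_mul_natCast_mul_sq 1 (hb.mul hb) hz3, vA, valuation_two_pow] at hv2
  obtain ⟨k, rfl⟩ := hm
  omega

theorem not_hSol_two_mul_odd_two_mul_odd {m n b : ℕ} (hm : Even m) (hn : Odd n) (hb : Odd b)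
    (z1 z2 z3 : ℚ_[2]) : ¬ HSol ℚ_[2] m n (2 * b) (2 * b) z1 z2 z3 := by
  rintro ⟨hz1, hz2, e1, e2⟩
  push_cast at e1 e2
  have vA := valuation_two_pow_mul_natCast_mul_sq 1 hb hz1
  have vR := valuation_two_pow_mul_natCast_sq m hn
  have hA : Odd ((2 : ℚ_[2]) ^ 1 * b * z1 ^ 2).valuation := by
    rw [vA]; exact ⟨z1.valuation, by push_cast; ring⟩
  obtain ⟨-, hv1⟩ := add_ne_zero_and_valuation_add_of_odd_of_even
    (y := -((2 : ℚ_[2]) ^ m * (n : ℚ_[2]) ^ 2)) hA (by simp [hn.pos.ne'])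
    (by rw [valuation_neg, vR]; exact hm.natCast)
  obtain ⟨hne2, hv2⟩ := add_ne_zero_and_valuation_add_of_odd_of_even
    (y := (2 : ℚ_[2]) ^ m) hA (by simp) (by rw [valuation_two_pow]; exact hm.natCast)
  rw [show (2 : ℚ_[2]) ^ 1 * b * z1 ^ 2 + -(2 ^ m * n ^ 2) = 2 ^ 1 * b * z2 ^ 2 by
    linear_combination e1, valuation_two_pow_mul_natCast_mul_sq 1 hb hz2, vA, valuation_neg,
    vR] at hv1
  rw [show (2 : ℚ_[2]) ^ 1 * b * z1 ^ 2 + 2 ^ m = 2 ^ 2 * (b * b : ℕ) * z3 ^ 2 by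
    push_cast; linear_combination e2] at hv2 hne2
  have hz3 : z3 ≠ 0 := by rintro rfl; simp at hne2
  rw [valuation_two_pow_mul_natCast_mul_sq 2 (hb.mul hb) hz3, vA, valuation_two_pow] at hv2
  obtain ⟨k, rfl⟩ := hm
  omega

theorem stmt_10_general (m n : ℕ) (hmeven : Even m) (hnodd : Odd n) (b : ℕ) (hbn : b ∣ n) :
    (¬ ∃ z1 z2 z3 : ℚ_[2], HSol ℚ_[2] m n (2 * b) b z1 z2 z3) ∧
    (¬ ∃ z1 z2 z3 : ℚ_[2], HSol ℚ_[2] m n (2 * b) (2 * b) z1 z2 z3) := by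
  have hb : Odd b := hnodd.of_dvd_nat hbn
  exact ⟨fun ⟨z1, z2, z3, h⟩ ↦ not_hSol_two_mul_odd_odd hmeven hnodd hb z1 z2 z3 h,
    fun ⟨z1, z2, z3, h⟩ ↦ not_hSol_two_mul_odd_two_mul_odd hmeven hnodd hb z1 z2 z3 h⟩

theorem stmt_10 (m n q : ℕ) (hm : 0 < m) (hmeven : Even m) (hnpos : 0 < n)
    (hnodd : Odd n) (hnsf : Squarefree n) (hq : Nat.Prime q) (hqodd : Odd q)
    (hnq : n ^ 2 + 1 = 2 * q)
    (b : ℕ) (hbpos : 0 < b) (hbn : b ∣ n) :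
    (¬ ∃ z1 z2 z3 : ℚ_[2], HSol ℚ_[2] m n (2 * b) b z1 z2 z3) ∧
    (¬ ∃ z1 z2 z3 : ℚ_[2], HSol ℚ_[2] m n (2 * b) (2 * b) z1 z2 z3) :=
  stmt_10_general m n hmeven hnodd b hbn
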